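/- arXiv:1604.04245 — 6 statements merged into one kernel-verified Lean document; each statement's English description precedes it below -/
import Mathlib

section
/- Let u ∈ C⁴([a,b]) satisfy u(a) = u(b) = u''(a) = u''(b) = 0 and u⁗(t) ≥ 0 for all t ∈ [a,b], with u⁗ not identically zero. Then u''(t) < 0 for all t ∈ (a,b). -/
/-!
Since `(u'')'' = u⁗ ≥ 0`, the function `u''` is convex on `[a,b]`; vanishing at both endpoints,
it is `≤ 0` there. If it vanished at an interior point, that point would be a maximum of a convex
function strictly inside `[a,b]`, which forces `u''` to be constant, hence `u'' ≡ 0` on `[a,b]`,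
and differentiating twice gives `u⁗ ≡ 0`.
-/

open Set

section MaximumPrinciple

variable {𝕜 β : Type*} [Field 𝕜] [LinearOrder 𝕜] [IsStrictOrderedRing 𝕜]
  [AddCommMonoid β] [LinearOrder β] [IsOrderedCancelAddMonoid β]
  [Module 𝕜 β] [PosSMulStrictMono 𝕜 β] {s : Set 𝕜} {f : 𝕜 → β} {a b t x : 𝕜}

theorem ConvexOn.eq_of_isMaxOn (hf : ConvexOn 𝕜 s f) (hmax : IsMaxOn f s t)
    (ha : a ∈ s) (hb : b ∈ s) (ht : t ∈ Ioo a b) (hx : x ∈ s) : f x = f t := by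
  refine le_antisymm (hmax hx) ?_
  rcases le_total x t with hxt | htx
  · exact hf.le_left_of_right_le'' hx hb hxt ht.2 (hmax hb)
  · exact hf.le_right_of_left_le'' ha hx ht.1 htx (hmax ha)

end MaximumPrinciple

theorem HasDerivWithinAt.eq_zero_of_eqOn_zero {𝕜 F : Type*} [NontriviallyNormedField 𝕜]
    [NormedAddCommGroup F] [NormedSpace 𝕜 F] {f : 𝕜 → F} {f' : F} {s : Set 𝕜} {x : 𝕜}
    (hf : HasDerivWithinAt f f' s x) (hs : UniqueDiffWithinAt 𝕜 s x) (h0 : EqOn f 0 s)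
    (hx : x ∈ s) : f' = 0 :=
  hs.eq_deriv s hf <| (hasDerivWithinAt_const x s 0).congr_of_mem h0 hx

theorem convexOn_Icc_of_hasDerivWithinAt2_nonneg {a b : ℝ} {f f' f'' : ℝ → ℝ}
    (hf : ∀ x ∈ Icc a b, HasDerivWithinAt f (f' x) (Icc a b) x)
    (hf' : ∀ x ∈ Icc a b, HasDerivWithinAt f' (f'' x) (Icc a b) x)
    (hf''₀ : ∀ x ∈ Icc a b, 0 ≤ f'' x) : ConvexOn ℝ (Icc a b) f := by
  refine convexOn_of_hasDerivWithinAt2_nonneg (f' := f') (f'' := f'') (convex_Icc a b)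
    (fun x hx ↦ (hf x hx).continuousWithinAt) ?_ ?_ ?_ <;> rw [interior_Icc]
  · exact fun x hx ↦ (hf x (Ioo_subset_Icc_self hx)).mono Ioo_subset_Icc_self
  · exact fun x hx ↦ (hf' x (Ioo_subset_Icc_self hx)).mono Ioo_subset_Icc_self
  · exact fun x hx ↦ hf''₀ x (Ioo_subset_Icc_self hx)

theorem stmt3_general (a b : ℝ) (hab : a < b) (u2 u3 u4 : ℝ → ℝ)
    (hd3 : ∀ t ∈ Icc a b, HasDerivWithinAt u2 (u3 t) (Icc a b) t)
    (hd4 : ∀ t ∈ Icc a b, HasDerivWithinAt u3 (u4 t) (Icc a b) t)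
    (hu2a : u2 a = 0) (hu2b : u2 b = 0)
    (hpos : ∀ t ∈ Icc a b, 0 ≤ u4 t)
    (hne : ∃ t ∈ Icc a b, u4 t ≠ 0) :
    ∀ t ∈ Ioo a b, u2 t < 0 := by
  intro t ht
  by_contra! hu2t
  have hconv : ConvexOn ℝ (Icc a b) u2 := convexOn_Icc_of_hasDerivWithinAt2_nonneg hd3 hd4 hpos
  have ha : a ∈ Icc a b := left_mem_Icc.2 hab.le
  have hb : b ∈ Icc a b := right_mem_Icc.2 hab.le
  have hmax : IsMaxOn u2 (Icc a b) t := fun s hs ↦ by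
    have hle := hconv.le_on_segment ha hb (by rwa [segment_eq_Icc hab.le])
    rw [hu2a, hu2b, max_self] at hle
    exact hle.trans hu2t
  have hu2 : EqOn u2 0 (Icc a b) := fun s hs ↦ by
    rw [Pi.zero_apply, hconv.eq_of_isMaxOn hmax ha hb ht hs, ← hu2a,
      hconv.eq_of_isMaxOn hmax ha hb ht ha]
  have hu3 : EqOn u3 0 (Icc a b) := fun s hs ↦
    (hd3 s hs).eq_zero_of_eqOn_zero (uniqueDiffOn_Icc hab s hs) hu2 hs
  obtain ⟨s, hs, hu4s⟩ := hne
  exact hu4s <| (hd4 s hs).eq_zero_of_eqOn_zero (uniqueDiffOn_Icc hab s hs) hu3 hs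

/-- If `u ∈ C⁴([a,b])` satisfies the simply supported beam conditions,
`u⁗ ≥ 0` on `[a,b]` and `u⁗ ≢ 0`, then `u'' < 0` on `(a,b)`. -/
theorem stmt3 (a b : ℝ) (hab : a < b) (u u1 u2 u3 u4 : ℝ → ℝ)
    (hd1 : ∀ t ∈ Icc a b, HasDerivWithinAt u (u1 t) (Icc a b) t)
    (hd2 : ∀ t ∈ Icc a b, HasDerivWithinAt u1 (u2 t) (Icc a b) t)
    (hd3 : ∀ t ∈ Icc a b, HasDerivWithinAt u2 (u3 t) (Icc a b) t)
    (hd4 : ∀ t ∈ Icc a b, HasDerivWithinAt u3 (u4 t) (Icc a b) t)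
    (hcont : ContinuousOn u4 (Icc a b))
    (hua : u a = 0) (hub : u b = 0) (hu2a : u2 a = 0) (hu2b : u2 b = 0)
    (hpos : ∀ t ∈ Icc a b, 0 ≤ u4 t)
    (hne : ∃ t ∈ Icc a b, u4 t ≠ 0) :
    ∀ t ∈ Ioo a b, u2 t < 0 :=
  stmt3_general a b hab u2 u3 u4 hd3 hd4 hu2a hu2b hpos hne
end

section
/- Let v₁ ∈ C²([a,b]) and v₂ ∈ C¹([a,b]) be strictly positive functions, and let u ∈ C⁴([a,b]) satisfy u(a) = u(b) = u''(a) = u''(b) = 0 and v₁(t)v₂(t) · d/dt( (1/v₂(t)) · d/dt( u''(t)/v₁(t) ) ) ≥ 0 on [a,b], not identically zero. Then u(t) > 0 for all t ∈ (a,b), u'(a) > 0, and u'(b) < 0. -/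
/-!
Write `g = u''/v₁` and `h = g'/v₂`. Since `T[0]u = v₁ v₂ h' ≥ 0`, `h` is nondecreasing, and it is not
identically zero because `h'` is not. So `g' = v₂ h` changes sign at most once, from `-` to `+`, and
with `g(a) = g(b) = 0` this forces `g < 0`, i.e. `u'' < 0`, on `(a, b)`. Then `u'` is strictly
decreasing and vanishes at a Rolle point of `u`, which gives `u'(a) > 0 > u'(b)` and `u > 0`.
-/

open Set

section DerivOnIcc

variable {a b : ℝ} {f f' : ℝ → ℝ}

lemma hasDerivWithinAt_Icc_subset {c d : ℝ}
    (hf : ∀ t ∈ Icc a b, HasDerivWithinAt f (f' t) (Icc a b) t) (hac : a ≤ c) (hdb : d ≤ b) :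
    ∀ t ∈ Icc c d, HasDerivWithinAt f (f' t) (Icc c d) t :=
  fun t ht => (hf t (Icc_subset_Icc hac hdb ht)).mono (Icc_subset_Icc hac hdb)

lemma continuousOn_Icc_of_hasDerivWithinAt
    (hf : ∀ t ∈ Icc a b, HasDerivWithinAt f (f' t) (Icc a b) t) : ContinuousOn f (Icc a b) :=
  fun t ht => (hf t ht).continuousWithinAt

lemma hasDerivAt_of_hasDerivWithinAt_Icc
    (hf : ∀ t ∈ Icc a b, HasDerivWithinAt f (f' t) (Icc a b) t) :
    ∀ t ∈ Ioo a b, HasDerivAt f (f' t) t :=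
  fun t ht => (hf t (Ioo_subset_Icc_self ht)).hasDerivAt (Icc_mem_nhds ht.1 ht.2)

lemma hasDerivWithinAt_interior_Icc
    (hf : ∀ t ∈ Icc a b, HasDerivWithinAt f (f' t) (Icc a b) t) :
    ∀ t ∈ interior (Icc a b), HasDerivWithinAt f (f' t) (interior (Icc a b)) t := by
  rw [interior_Icc]
  exact fun t ht => (hasDerivAt_of_hasDerivWithinAt_Icc hf t ht).hasDerivWithinAt

lemma monotoneOn_Icc_of_hasDerivWithinAt_nonneg
    (hf : ∀ t ∈ Icc a b, HasDerivWithinAt f (f' t) (Icc a b) t)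
    (hf' : ∀ t ∈ Ioo a b, 0 ≤ f' t) : MonotoneOn f (Icc a b) :=
  monotoneOn_of_hasDerivWithinAt_nonneg (convex_Icc a b) (continuousOn_Icc_of_hasDerivWithinAt hf)
    (hasDerivWithinAt_interior_Icc hf) (by rwa [interior_Icc])

lemma strictMonoOn_Icc_of_hasDerivWithinAt_pos
    (hf : ∀ t ∈ Icc a b, HasDerivWithinAt f (f' t) (Icc a b) t)
    (hf' : ∀ t ∈ Ioo a b, 0 < f' t) : StrictMonoOn f (Icc a b) :=
  strictMonoOn_of_hasDerivWithinAt_pos (convex_Icc a b) (continuousOn_Icc_of_hasDerivWithinAt hf)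
    (hasDerivWithinAt_interior_Icc hf) (by rwa [interior_Icc])

lemma strictAntiOn_Icc_of_hasDerivWithinAt_neg
    (hf : ∀ t ∈ Icc a b, HasDerivWithinAt f (f' t) (Icc a b) t)
    (hf' : ∀ t ∈ Ioo a b, f' t < 0) : StrictAntiOn f (Icc a b) :=
  strictAntiOn_of_hasDerivWithinAt_neg (convex_Icc a b) (continuousOn_Icc_of_hasDerivWithinAt hf)
    (hasDerivWithinAt_interior_Icc hf) (by rwa [interior_Icc])

lemma HasDerivWithinAt.eq_zero_of_eqOn_const_Icc {c t f₀' : ℝ} (hab : a < b) (ht : t ∈ Icc a b)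
    (hf : HasDerivWithinAt f f₀' (Icc a b) t) (hc : EqOn f (fun _ => c) (Icc a b)) : f₀' = 0 :=
  (uniqueDiffOn_Icc hab t ht).eq_deriv _ hf ((hasDerivWithinAt_const t _ c).congr hc (hc ht))

lemma hasDerivWithinAt_eq_zero_of_nonneg_of_le (hab : a < b)
    (hf : ∀ t ∈ Icc a b, HasDerivWithinAt f (f' t) (Icc a b) t)
    (hf' : ∀ t ∈ Ioo a b, 0 ≤ f' t) (hle : f b ≤ f a) : ∀ t ∈ Icc a b, f' t = 0 := by
  have hmono := monotoneOn_Icc_of_hasDerivWithinAt_nonneg hf hf'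
  have hconst : EqOn f (fun _ => f a) (Icc a b) := fun s hs =>
    le_antisymm ((hmono hs (right_mem_Icc.2 hab.le) hs.2).trans hle)
      (hmono (left_mem_Icc.2 hab.le) hs hs.1)
  exact fun t ht => (hf t ht).eq_zero_of_eqOn_const_Icc hab ht hconst

lemma hasDerivWithinAt_eq_zero_of_nonpos_of_le (hab : a < b)
    (hf : ∀ t ∈ Icc a b, HasDerivWithinAt f (f' t) (Icc a b) t)
    (hf' : ∀ t ∈ Ioo a b, f' t ≤ 0) (hle : f a ≤ f b) : ∀ t ∈ Icc a b, f' t = 0 := by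
  intro t ht
  simpa using hasDerivWithinAt_eq_zero_of_nonneg_of_le hab (fun s hs => (hf s hs).neg)
    (fun s hs => neg_nonneg.2 (hf' s hs)) (neg_le_neg hle) t ht

end DerivOnIcc

/-- `f'` vanishes at a Rolle point `c`, so `f` increases on `[a, c]` and decreases on `[c, b]`. -/
lemma lt_and_deriv_pos_and_deriv_neg_of_strictAntiOn {a b : ℝ} {f f' : ℝ → ℝ} (hab : a < b)
    (hf : ∀ t ∈ Icc a b, HasDerivWithinAt f (f' t) (Icc a b) t)
    (hf' : StrictAntiOn f' (Icc a b)) (hfab : f a = f b) :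
    (∀ t ∈ Ioo a b, f a < f t) ∧ 0 < f' a ∧ f' b < 0 := by
  obtain ⟨c, hc, hf'c⟩ := exists_hasDerivAt_eq_zero hab (continuousOn_Icc_of_hasDerivWithinAt hf)
    hfab (hasDerivAt_of_hasDerivWithinAt_Icc hf)
  have hpos : ∀ t ∈ Ico a c, 0 < f' t := fun t ht =>
    hf'c ▸ hf' ⟨ht.1, ht.2.le.trans hc.2.le⟩ (Ioo_subset_Icc_self hc) ht.2
  have hneg : ∀ t ∈ Ioc c b, f' t < 0 := fun t ht =>
    hf'c ▸ hf' (Ioo_subset_Icc_self hc) ⟨hc.1.le.trans ht.1.le, ht.2⟩ ht.1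
  refine ⟨fun t ht => ?_, hpos a ⟨le_rfl, hc.1⟩, hneg b ⟨hc.2, le_rfl⟩⟩
  rcases le_total t c with htc | hct
  · exact strictMonoOn_Icc_of_hasDerivWithinAt_pos (hasDerivWithinAt_Icc_subset hf le_rfl hc.2.le)
      (fun s hs => hpos s ⟨hs.1.le, hs.2⟩) (left_mem_Icc.2 hc.1.le) ⟨ht.1.le, htc⟩ ht.1
  · rw [hfab]
    exact strictAntiOn_Icc_of_hasDerivWithinAt_neg (hasDerivWithinAt_Icc_subset hf hc.1.le le_rfl)
      (fun s hs => hneg s ⟨hs.1, hs.2.le⟩) ⟨hct, ht.2.le⟩ (right_mem_Icc.2 hc.2.le) ht.2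

/-- `k a < 0`, since otherwise `f` is monotone with equal boundary values, hence constant, and
`k ≡ 0`. If `f t ≥ f a`, the mean value theorem on `[t, b]` gives `k ≤ 0` on `[a, t]`, so `f` is
constant on `[a, t]` and `k a = 0`. -/
lemma lt_of_hasDerivWithinAt_mul_monotoneOn {a b : ℝ} {f w k : ℝ → ℝ}
    (hf : ∀ t ∈ Icc a b, HasDerivWithinAt f (w t * k t) (Icc a b) t)
    (hw : ∀ t ∈ Icc a b, 0 < w t) (hk : MonotoneOn k (Icc a b))
    (hk0 : ∃ t ∈ Icc a b, k t ≠ 0) (hfab : f a = f b) : ∀ t ∈ Ioo a b, f t < f a := by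
  intro t ht
  have hab : a < b := ht.1.trans ht.2
  have ha : a ∈ Icc a b := left_mem_Icc.2 hab.le
  have hka : k a < 0 := by
    obtain ⟨s, hs, hks⟩ := hk0
    by_contra! hka
    have hk_nonneg : ∀ r ∈ Ioo a b, 0 ≤ w r * k r := fun r hr =>
      mul_nonneg (hw r (Ioo_subset_Icc_self hr)).le
        (hka.trans (hk ha (Ioo_subset_Icc_self hr) hr.1.le))
    have hws := hasDerivWithinAt_eq_zero_of_nonneg_of_le hab hf hk_nonneg hfab.ge s hs
    exact hks ((mul_eq_zero.1 hws).resolve_left (hw s hs).ne')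
  by_contra! hft
  have htb : Icc t b ⊆ Icc a b := Icc_subset_Icc ht.1.le le_rfl
  obtain ⟨s, hs, hslope⟩ := exists_hasDerivAt_eq_slope f (fun r => w r * k r) ht.2
    ((continuousOn_Icc_of_hasDerivWithinAt hf).mono htb)
    (fun r hr => hasDerivAt_of_hasDerivWithinAt_Icc hf r (Ioo_subset_Ioo_left ht.1.le hr))
  have hsmem : s ∈ Icc a b := htb (Ioo_subset_Icc_self hs)
  have hks : k s ≤ 0 := by
    refine nonpos_of_mul_nonpos_right ?_ (hw s hsmem)
    rw [hslope]
    exact div_nonpos_of_nonpos_of_nonneg (by linarith) (by linarith [ht.2])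
  have hk_nonpos : ∀ r ∈ Ioo a t, w r * k r ≤ 0 := fun r hr =>
    mul_nonpos_of_nonneg_of_nonpos (hw r ⟨hr.1.le, hr.2.le.trans ht.2.le⟩).le
      ((hk ⟨hr.1.le, hr.2.le.trans ht.2.le⟩ hsmem (hr.2.trans hs.1).le).trans hks)
  have hwa := hasDerivWithinAt_eq_zero_of_nonpos_of_le ht.1
    (hasDerivWithinAt_Icc_subset hf le_rfl ht.2.le) hk_nonpos hft a (left_mem_Icc.2 ht.1.le)
  exact hka.ne ((mul_eq_zero.1 hwa).resolve_left (hw a ha).ne')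

/-- Here `g1 = (u2 / v1)'` and `h1 = (g1 / v2)'`, so that `T[0]u = v1 v2 h1`. -/
theorem stmt4_general (a b : ℝ) (hab : a < b) (v1 v2 : ℝ → ℝ)
    (hv1pos : ∀ t ∈ Icc a b, 0 < v1 t) (hv2pos : ∀ t ∈ Icc a b, 0 < v2 t)
    (u u1 u2 : ℝ → ℝ)
    (hd1 : ∀ t ∈ Icc a b, HasDerivWithinAt u (u1 t) (Icc a b) t)
    (hd2 : ∀ t ∈ Icc a b, HasDerivWithinAt u1 (u2 t) (Icc a b) t)
    (g1 h1 : ℝ → ℝ)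
    (hg1 : ∀ t ∈ Icc a b, HasDerivWithinAt (fun s => u2 s / v1 s) (g1 t) (Icc a b) t)
    (hh1 : ∀ t ∈ Icc a b, HasDerivWithinAt (fun s => g1 s / v2 s) (h1 t) (Icc a b) t)
    (hua : u a = 0) (hub : u b = 0) (hu2a : u2 a = 0) (hu2b : u2 b = 0)
    (hpos : ∀ t ∈ Icc a b, 0 ≤ v1 t * v2 t * h1 t)
    (hne : ∃ t ∈ Icc a b, v1 t * v2 t * h1 t ≠ 0) :
    (∀ t ∈ Ioo a b, 0 < u t) ∧ 0 < u1 a ∧ u1 b < 0 := by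
  have hh_mono : MonotoneOn (fun s => g1 s / v2 s) (Icc a b) :=
    monotoneOn_Icc_of_hasDerivWithinAt_nonneg hh1 fun t ht =>
      nonneg_of_mul_nonneg_right (hpos t (Ioo_subset_Icc_self ht))
        (mul_pos (hv1pos t (Ioo_subset_Icc_self ht)) (hv2pos t (Ioo_subset_Icc_self ht)))
  have hh_ne : ∃ t ∈ Icc a b, g1 t / v2 t ≠ 0 := by
    obtain ⟨t₀, ht₀, hne₀⟩ := hne
    by_contra! hzero
    exact hne₀ (by rw [(hh1 t₀ ht₀).eq_zero_of_eqOn_const_Icc hab ht₀ hzero, mul_zero])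
  have hg_deriv : ∀ t ∈ Icc a b,
      HasDerivWithinAt (fun s => u2 s / v1 s) (v2 t * (g1 t / v2 t)) (Icc a b) t := fun t ht =>
    (hg1 t ht).congr_deriv (mul_div_cancel₀ _ (hv2pos t ht).ne').symm
  have hg_neg : ∀ t ∈ Ioo a b, u2 t / v1 t < u2 a / v1 a :=
    lt_of_hasDerivWithinAt_mul_monotoneOn hg_deriv hv2pos hh_mono hh_ne (by simp [hu2a, hu2b])
  have hu1_anti : StrictAntiOn u1 (Icc a b) :=
    strictAntiOn_Icc_of_hasDerivWithinAt_neg hd2 fun t ht =>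
      neg_of_div_neg_left (by simpa only [hu2a, zero_div] using hg_neg t ht)
        (hv1pos t (Ioo_subset_Icc_self ht)).le
  simpa only [hua] using lt_and_deriv_pos_and_deriv_neg_of_strictAntiOn hab hd1 hu1_anti
    (hua.trans hub.symm)

/-- Strong inverse positivity for the disconjugate operator in Pólya factored form
`T[0]u = v₁ v₂ (1/v₂ (u''/v₁)')'` with `v₁, v₂ > 0`, under simply supported beam
boundary conditions. Here `g = u''/v₁`, `g1 = g'`, `h = g1/v₂`, `h1 = h'`, so that
`T[0]u(t) = v₁(t) v₂(t) h1(t)`. -/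
theorem stmt4 (a b : ℝ) (hab : a < b) (v1 v2 : ℝ → ℝ)
    (hv1 : ContDiffOn ℝ 2 v1 (Icc a b)) (hv2 : ContDiffOn ℝ 1 v2 (Icc a b))
    (hv1pos : ∀ t ∈ Icc a b, 0 < v1 t) (hv2pos : ∀ t ∈ Icc a b, 0 < v2 t)
    (u u1 u2 u3 u4 : ℝ → ℝ)
    (hd1 : ∀ t ∈ Icc a b, HasDerivWithinAt u (u1 t) (Icc a b) t)
    (hd2 : ∀ t ∈ Icc a b, HasDerivWithinAt u1 (u2 t) (Icc a b) t)
    (hd3 : ∀ t ∈ Icc a b, HasDerivWithinAt u2 (u3 t) (Icc a b) t)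
    (hd4 : ∀ t ∈ Icc a b, HasDerivWithinAt u3 (u4 t) (Icc a b) t)
    (hcont : ContinuousOn u4 (Icc a b))
    (g1 h1 : ℝ → ℝ)
    (hg1 : ∀ t ∈ Icc a b, HasDerivWithinAt (fun s => u2 s / v1 s) (g1 t) (Icc a b) t)
    (hh1 : ∀ t ∈ Icc a b, HasDerivWithinAt (fun s => g1 s / v2 s) (h1 t) (Icc a b) t)
    (hconth1 : ContinuousOn h1 (Icc a b))
    (hua : u a = 0) (hub : u b = 0) (hu2a : u2 a = 0) (hu2b : u2 b = 0)
    (hpos : ∀ t ∈ Icc a b, 0 ≤ v1 t * v2 t * h1 t)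
    (hne : ∃ t ∈ Icc a b, v1 t * v2 t * h1 t ≠ 0) :
    (∀ t ∈ Ioo a b, 0 < u t) ∧ 0 < u1 a ∧ u1 b < 0 :=
  stmt4_general a b hab v1 v2 hv1pos hv2pos u u1 u2 hd1 hd2 g1 h1 hg1 hh1 hua hub hu2a hu2b hpos hne
end

section
/- Suppose the second order equation u'' + p₁ u' + p₂ u = 0 is disconjugate on [a,b], i.e., the operator L₂ admits a factorization L₂u = v₁v₂ (1/v₂ (u/v₁)')' with v₁, v₂ > 0 on [a,b]. Then every function u ∈ C⁴([a,b]) with u(a)=u(b)=u''(a)=u''(b)=0 and u⁗ + p₁u''' + p₂u'' ≥ 0 on [a,b] (not identically zero) satisfies u > 0 on (a,b). -/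
/-!
Put `w = u''`, so that `T[0]u = L₂ w`. The Pólya factorization turns `L₂ w ≥ 0` into
monotonicity of `h = (w / v₁)' / v₂`; since `(w / v₁)' = v₂ h` then changes sign at most once,
from negative to positive, `w / v₁` vanishing at `a` and `b` forces `w ≤ 0`. Hence `u` is concave
with `u(a) = u(b) = 0`, so `u ≥ 0`, and an interior zero would force `u ≡ 0`, hence `T[0]u ≡ 0`.
-/

open Set

lemma nonpos_of_monotoneOn_deriv_div {g v : ℝ → ℝ} {a b : ℝ}
    (hg : ∀ x ∈ Icc a b, DifferentiableAt ℝ g x) (hv : ∀ x ∈ Icc a b, 0 < v x)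
    (hmono : MonotoneOn (fun x => deriv g x / v x) (Icc a b))
    (ha : g a = 0) (hb : g b = 0) : ∀ x ∈ Icc a b, g x ≤ 0 := by
  intro c hc
  by_contra! hpos
  have hac : a < c := hc.1.lt_of_ne (by rintro rfl; linarith)
  have hcb : c < b := hc.2.lt_of_ne (by rintro rfl; linarith)
  have hgc : ContinuousOn g (Icc a b) := fun x hx => (hg x hx).continuousAt.continuousWithinAt
  have hgd : DifferentiableOn ℝ g (Icc a b) := fun x hx => (hg x hx).differentiableWithinAt
  obtain ⟨ξ₁, hξ₁, hslope₁⟩ := exists_deriv_eq_slope g hac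
    (hgc.mono (Icc_subset_Icc le_rfl hc.2)) (hgd.mono (Ioo_subset_Icc_self.trans
      (Icc_subset_Icc le_rfl hc.2)))
  obtain ⟨ξ₂, hξ₂, hslope₂⟩ := exists_deriv_eq_slope g hcb
    (hgc.mono (Icc_subset_Icc hc.1 le_rfl)) (hgd.mono (Ioo_subset_Icc_self.trans
      (Icc_subset_Icc hc.1 le_rfl)))
  have hξ₁' : ξ₁ ∈ Icc a b := ⟨hξ₁.1.le, (hξ₁.2.trans hcb).le⟩
  have hξ₂' : ξ₂ ∈ Icc a b := ⟨(hac.trans hξ₂.1).le, hξ₂.2.le⟩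
  have hd₁ : 0 < deriv g ξ₁ := by
    rw [hslope₁, ha]; exact div_pos (by linarith) (by linarith)
  have hd₂ : deriv g ξ₂ < 0 := by
    rw [hslope₂, hb]; exact div_neg_of_neg_of_pos (by linarith) (by linarith)
  have hh : deriv g ξ₂ / v ξ₂ < deriv g ξ₁ / v ξ₁ :=
    (div_neg_of_neg_of_pos hd₂ (hv ξ₂ hξ₂')).trans (div_pos hd₁ (hv ξ₁ hξ₁'))
  exact hh.not_ge (hmono hξ₁' hξ₂' (hξ₁.2.trans hξ₂.1).le)

theorem nonpos_of_polya_factorization {a b : ℝ} {p1 p2 v1 v2 w : ℝ → ℝ}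
    (hv1 : ContDiff ℝ 2 v1) (hv2 : ContDiff ℝ 1 v2)
    (hv1pos : ∀ t ∈ Icc a b, 0 < v1 t) (hv2pos : ∀ t ∈ Icc a b, 0 < v2 t)
    (hw : ContDiff ℝ 2 w)
    (hfact : ∀ t ∈ Icc a b, deriv (deriv w) t + p1 t * deriv w t + p2 t * w t =
        v1 t * v2 t * deriv (fun s => deriv (fun r => w r / v1 r) s / v2 s) t)
    (hLw : ∀ t ∈ Icc a b, 0 ≤ deriv (deriv w) t + p1 t * deriv w t + p2 t * w t)
    (hwa : w a = 0) (hwb : w b = 0) : ∀ t ∈ Icc a b, w t ≤ 0 := by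
  set g : ℝ → ℝ := fun r => w r / v1 r
  set h : ℝ → ℝ := fun s => deriv g s / v2 s
  have hg : ∀ x ∈ Icc a b, ContDiffAt ℝ 2 g x := fun x hx =>
    hw.contDiffAt.div hv1.contDiffAt (hv1pos x hx).ne'
  have hh : ∀ x ∈ Icc a b, DifferentiableAt ℝ h x := fun x hx =>
    (((hg x hx).derivWithin (m := 1) le_rfl).div hv2.contDiffAt
      (hv2pos x hx).ne').differentiableAt one_ne_zero
  have hh_mono : MonotoneOn h (Icc a b) := by
    refine monotoneOn_of_deriv_nonneg (convex_Icc a b)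
      (fun x hx => (hh x hx).continuousAt.continuousWithinAt) ?_ ?_ <;> rw [interior_Icc]
    · exact fun x hx => (hh x (Ioo_subset_Icc_self hx)).differentiableWithinAt
    · intro x hx
      have hx' := Ioo_subset_Icc_self hx
      refine (mul_nonneg_iff_of_pos_left (mul_pos (hv1pos x hx') (hv2pos x hx'))).mp ?_
      exact hfact x hx' ▸ hLw x hx'
  have hg_nonpos := nonpos_of_monotoneOn_deriv_div
    (fun x hx => (hg x hx).differentiableAt two_ne_zero) hv2pos hh_mono
    (by simp [g, hwa]) (by simp [g, hwb])
  intro t ht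
  simpa using (div_le_iff₀ (hv1pos t ht)).mp (hg_nonpos t ht)

theorem ConcaveOn.pos_on_Ioo {f : ℝ → ℝ} {a b : ℝ} (hf : ConcaveOn ℝ (Icc a b) f)
    (ha : f a = 0) (hb : f b = 0) (hne : ∃ x ∈ Icc a b, f x ≠ 0) : ∀ t ∈ Ioo a b, 0 < f t := by
  obtain ⟨x, hx, hfx⟩ := hne
  have hab : a ≤ b := hx.1.trans hx.2
  have hnonneg : ∀ y ∈ Icc a b, 0 ≤ f y := fun y hy => by
    simpa [ha, hb] using hf.ge_on_segment (left_mem_Icc.mpr hab) (right_mem_Icc.mpr hab)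
      (by rwa [segment_eq_Icc hab])
  have hfx_pos : 0 < f x := (hnonneg x hx).lt_of_ne' hfx
  intro t ht
  by_contra! hft
  rcases lt_trichotomy x t with hxt | rfl | htx
  · have := hf.left_lt_of_lt_right (right_mem_Icc.mpr hab) hx
      (by rw [openSegment_symm, openSegment_eq_Ioo (hxt.trans ht.2)]; exact ⟨hxt, ht.2⟩)
      (hft.trans_lt hfx_pos)
    linarith
  · linarith
  · have := hf.left_lt_of_lt_right (left_mem_Icc.mpr hab) hx
      (by rw [openSegment_eq_Ioo (ht.1.trans htx)]; exact ⟨ht.1, htx⟩)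
      (hft.trans_lt hfx_pos)
    linarith

lemma eqOn_iteratedDeriv_zero_of_eqOn_zero {f : ℝ → ℝ} {a b : ℝ} {n : ℕ} (hab : a < b)
    (hf : ContDiff ℝ n f) (h : EqOn f 0 (Icc a b)) : EqOn (iteratedDeriv n f) 0 (Icc a b) := by
  have hIoo : EqOn (iteratedDeriv n f) 0 (Ioo a b) := fun x hx => by
    simpa [iteratedDeriv_const_zero] using
      (h.mono Ioo_subset_Icc_self).iteratedDeriv_of_isOpen isOpen_Ioo n hx
  simpa [closure_Ioo hab.ne] using
    hIoo.closure (hf.continuous_iteratedDeriv n le_rfl) continuous_const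

theorem stmt5_general (a b : ℝ) (hab : a < b) (p1 p2 v1 v2 : ℝ → ℝ)
    (hv1 : ContDiff ℝ 4 v1) (hv2 : ContDiff ℝ 3 v2)
    (hv1pos : ∀ t ∈ Icc a b, 0 < v1 t) (hv2pos : ∀ t ∈ Icc a b, 0 < v2 t)
    (hfact : ∀ w : ℝ → ℝ, ContDiff ℝ 2 w → ∀ t ∈ Icc a b,
      deriv (deriv w) t + p1 t * deriv w t + p2 t * w t =
        v1 t * v2 t * deriv (fun s => deriv (fun r => w r / v1 r) s / v2 s) t)
    (u : ℝ → ℝ) (hu : ContDiff ℝ 4 u)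
    (hua : u a = 0) (hub : u b = 0)
    (hu2a : deriv (deriv u) a = 0) (hu2b : deriv (deriv u) b = 0)
    (hT : ∀ t ∈ Icc a b,
      0 ≤ iteratedDeriv 4 u t + p1 t * iteratedDeriv 3 u t + p2 t * deriv (deriv u) t)
    (hne : ∃ t ∈ Icc a b,
      iteratedDeriv 4 u t + p1 t * iteratedDeriv 3 u t + p2 t * deriv (deriv u) t ≠ 0) :
    ∀ t ∈ Ioo a b, 0 < u t := by
  have hw : ContDiff ℝ 2 (deriv (deriv u)) := hu.iterate_deriv' 2 2
  have hu2_nonpos : ∀ t ∈ Icc a b, deriv (deriv u) t ≤ 0 :=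
    nonpos_of_polya_factorization (hv1.of_le (by norm_num)) (hv2.of_le (by norm_num))
      hv1pos hv2pos hw (hfact _ hw) (by simpa [iteratedDeriv_eq_iterate] using hT) hu2a hu2b
  have hconcave : ConcaveOn ℝ (Icc a b) u := by
    refine concaveOn_of_deriv2_nonpos (convex_Icc a b) hu.continuous.continuousOn
      (hu.differentiable (by norm_num)).differentiableOn
      ((hu.iterate_deriv' 3 1).differentiable (by norm_num)).differentiableOn fun x hx => ?_
    rw [interior_Icc] at hx
    exact hu2_nonpos x (Ioo_subset_Icc_self hx)
  refine hconcave.pos_on_Ioo hua hub ?_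
  by_contra! hzero
  obtain ⟨t, ht, hTt⟩ := hne
  have hder (n : ℕ) (hn : n ≤ 4) : iteratedDeriv n u t = 0 :=
    eqOn_iteratedDeriv_zero_of_eqOn_zero hab (hu.of_le (by exact_mod_cast hn)) hzero ht
  have hder2 : deriv (deriv u) t = 0 := by
    simpa [iteratedDeriv_eq_iterate] using hder 2 (by norm_num)
  simp [hder2, hder 3 (by norm_num), hder 4 le_rfl] at hTt

/-- If the second order operator `L₂u = u'' + p₁u' + p₂u` admits a Pólya factorization
`L₂u = v₁ v₂ (1/v₂ (u/v₁)')'` with `v₁, v₂ > 0` on `[a,b]` (i.e. it is disconjugate),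
then the fourth order operator `T[0]u = u⁗ + p₁u''' + p₂u''` is inverse positive under
simply supported beam boundary conditions: `T[0]u ⪈ 0` implies `u > 0` on `(a,b)`. -/
theorem stmt5 (a b : ℝ) (hab : a < b) (p1 p2 v1 v2 : ℝ → ℝ)
    (hp1 : ContDiff ℝ 3 p1) (hp2 : ContDiff ℝ 2 p2)
    (hv1 : ContDiff ℝ 4 v1) (hv2 : ContDiff ℝ 3 v2)
    (hv1pos : ∀ t ∈ Icc a b, 0 < v1 t) (hv2pos : ∀ t ∈ Icc a b, 0 < v2 t)
    (hfact : ∀ w : ℝ → ℝ, ContDiff ℝ 2 w → ∀ t ∈ Icc a b,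
      deriv (deriv w) t + p1 t * deriv w t + p2 t * w t =
        v1 t * v2 t * deriv (fun s => deriv (fun r => w r / v1 r) s / v2 s) t)
    (u : ℝ → ℝ) (hu : ContDiff ℝ 4 u)
    (hua : u a = 0) (hub : u b = 0)
    (hu2a : deriv (deriv u) a = 0) (hu2b : deriv (deriv u) b = 0)
    (hT : ∀ t ∈ Icc a b,
      0 ≤ iteratedDeriv 4 u t + p1 t * iteratedDeriv 3 u t + p2 t * deriv (deriv u) t)
    (hne : ∃ t ∈ Icc a b,
      iteratedDeriv 4 u t + p1 t * iteratedDeriv 3 u t + p2 t * deriv (deriv u) t ≠ 0) :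
    ∀ t ∈ Ioo a b, 0 < u t :=
  stmt5_general a b hab p1 p2 v1 v2 hv1 hv2 hv1pos hv2pos hfact u hu hua hub hu2a hu2b hT hne
end

section
/- The equation tan(λ) = tanh(λ) has exactly one solution λ in the interval (π, 3π/2), and this solution lies in (3.9, 3.95). -/
/-!
On the branch `(π/2, 3π/2)` of `tan`, the function `tan - tanh` has derivative
`1 / cos² - 1 / cosh² > 0`, since `1 / cos² ≥ 1 > 1 / cosh²` away from `0`; hence it has at most
one zero there. It changes sign on `[3.9, 3.95]`: `tan (3.9 - π) < 0.99 < tanh 3.9` by Taylor bounds,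
and `tan (3.95 - π) > tan (π/4) = 1 > tanh 3.95` since `3.95 > 5π/4`. The intermediate value
theorem then locates the zero.
-/

open Set

namespace Real

theorem hasDerivAt_tanh (x : ℝ) : HasDerivAt tanh (1 / cosh x ^ 2) x := by
  have h := (hasDerivAt_sinh x).div (hasDerivAt_cosh x) (cosh_pos x).ne'
  rw [show (cosh x * cosh x - sinh x * sinh x) / cosh x ^ 2 = 1 / cosh x ^ 2 by
    rw [← cosh_sq_sub_sinh_sq x]; ring] at h
  exact h.congr_of_eventuallyEq (.of_forall fun y => tanh_eq_sinh_div_cosh y)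

theorem tanh_eq_one_sub (x : ℝ) : tanh x = 1 - 2 / (exp (2 * x) + 1) := by
  have h : exp (2 * x) = exp x * exp x := by rw [two_mul, exp_add]
  rw [tanh_eq, exp_neg, h]
  field_simp
  ring

theorem hasDerivAt_tan_sub_tanh {x : ℝ} (hx : cos x ≠ 0) :
    HasDerivAt (fun y => tan y - tanh y) (1 / cos x ^ 2 - 1 / cosh x ^ 2) x :=
  (hasDerivAt_tan hx).sub (hasDerivAt_tanh x)

theorem cos_ne_zero_of_mem_Ioo {x : ℝ} (hx : x ∈ Ioo (π / 2) (3 * π / 2)) : cos x ≠ 0 :=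
  (cos_neg_of_pi_div_two_lt_of_lt hx.1 (by linarith [hx.2])).ne

theorem continuousOn_tan_sub_tanh :
    ContinuousOn (fun y => tan y - tanh y) (Ioo (π / 2) (3 * π / 2)) := fun _ hx =>
  (hasDerivAt_tan_sub_tanh (cos_ne_zero_of_mem_Ioo hx)).continuousAt.continuousWithinAt

theorem strictMonoOn_tan_sub_tanh :
    StrictMonoOn (fun y => tan y - tanh y) (Ioo (π / 2) (3 * π / 2)) := by
  refine strictMonoOn_of_deriv_pos (convex_Ioo _ _) continuousOn_tan_sub_tanh fun x hx => ?_
  rw [interior_Ioo] at hx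
  have hcos := cos_ne_zero_of_mem_Ioo hx
  rw [(hasDerivAt_tan_sub_tanh hcos).deriv, sub_pos]
  have hcosh : 1 < cosh x := one_lt_cosh.2 (by linarith [hx.1, pi_pos])
  calc 1 / cosh x ^ 2 < 1 := by rw [div_lt_one (by positivity)]; nlinarith
    _ ≤ 1 / cos x ^ 2 := by rw [le_div_iff₀ (by positivity)]; linarith [cos_sq_le_one x]

theorem one_lt_tan {x : ℝ} (h₁ : π / 4 < x) (h₂ : x < π / 2) : 1 < tan x := by
  rw [← tan_pi_div_four]
  exact tan_lt_tan_of_lt_of_lt_pi_div_two (by linarith [pi_pos]) h₂ h₁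

theorem tan_lt_of_mem_Ioc {x : ℝ} (hx : x ∈ Ioc 0 0.76) : tan x < 0.99 := by
  obtain ⟨hx₀, hx₁⟩ := hx
  have habs : |x| ≤ 1 := by rw [abs_of_pos hx₀]; linarith
  have hsin : sin x ≤ x - x ^ 3 / 6 + x ^ 5 / 100 := by
    have := (abs_le.1 (sin_bound habs)).2
    rw [abs_of_pos hx₀] at this
    linarith
  have hcos : 1 - x ^ 2 / 2 ≤ cos x := one_sub_sq_div_two_le_cos
  have hcos₀ : 0 < cos x := by nlinarith
  rw [tan_eq_sin_div_cos, div_lt_iff₀ hcos₀]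
  nlinarith [pow_pos hx₀ 3, pow_pos hx₀ 4, mul_nonneg hx₀.le (sub_nonneg.2 hx₁)]

theorem lt_tanh_three_point_nine : 0.99 < tanh 3.9 := by
  have he : 387 < exp (2 * 3.9) :=
    calc (387 : ℝ) < 2.7182818283 ^ 6 := by norm_num
      _ < exp 1 ^ 6 := by gcongr; exact exp_one_gt_d9
      _ = exp 6 := by rw [← exp_nat_mul]; norm_num
      _ < exp (2 * 3.9) := exp_lt_exp.2 (by norm_num)
  rw [tanh_eq_one_sub, lt_sub_comm, div_lt_iff₀ (by positivity)]
  linarith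

end Real

open Real

/-- The equation `tan λ = tanh λ` has exactly one solution in `(π, 3π/2)`, and this
solution lies in `(3.9, 3.95)`. -/
theorem stmt9 : ∃ l ∈ Ioo Real.pi (3 * Real.pi / 2),
    Real.tan l = Real.tanh l ∧
    (∀ y ∈ Ioo Real.pi (3 * Real.pi / 2), Real.tan y = Real.tanh y → y = l) ∧
    l ∈ Ioo (3.9 : ℝ) 3.95 := by
  have hπ₁ := pi_gt_d2
  have hπ₂ := pi_lt_d2
  have hbranch : Ioo π (3 * π / 2) ⊆ Ioo (π / 2) (3 * π / 2) :=
    Ioo_subset_Ioo_left (by linarith)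
  have hleft : tan 3.9 - tanh 3.9 < 0 := by
    rw [← tan_sub_pi, sub_neg]
    exact (tan_lt_of_mem_Ioc ⟨by linarith, by linarith⟩).trans lt_tanh_three_point_nine
  have hright : 0 < tan 3.95 - tanh 3.95 := by
    rw [← tan_sub_pi, sub_pos]
    exact (tanh_lt_one _).trans (one_lt_tan (by linarith) (by linarith))
  obtain ⟨l, hl, hl₀⟩ := intermediate_value_Ioo (by norm_num) (continuousOn_tan_sub_tanh.mono
    fun x hx => ⟨by linarith [hx.1], by linarith [hx.2]⟩) ⟨hleft, hright⟩
  have hlmem : l ∈ Ioo π (3 * π / 2) := ⟨by linarith [hl.1], by linarith [hl.2]⟩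
  refine ⟨l, hlmem, sub_eq_zero.1 hl₀, fun y hy hty => ?_, hl⟩
  exact strictMonoOn_tan_sub_tanh.injOn (hbranch hy) (hbranch hlmem)
    (by simp only [hty, sub_self, hl₀])
end

section
/- Let y₁, y₂ ∈ C²([a,b]) form a Markov system, i.e., y₁ > 0 on [a,b] and the Wronskian W(t) = y₁(t)y₂'(t) - y₁'(t)y₂(t) > 0 on [a,b]. Then, setting v₁ = y₁ and v₂ = W/y₁², both v₁ and v₂ are positive on [a,b], and for every u ∈ C²([a,b]) in the span of y₁, y₂ one has v₁v₂ · (1/v₂ · (u/v₁)')' = 0 on [a,b]. -/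
open Set Filter Topology

/-!
Writing `W = y₁y₂' - y₁'y₂` and `u = c y₁ + d y₂`, the quotient rule gives
`(u/y₁)' = W(y₁, u)/y₁² = d W/y₁²`, since the Wronskian is linear in its second argument and
`W(y₁, y₁) = 0`. Hence `(u/v₁)'/v₂` is the constant `d` near every point where `y₁` and `W`
do not vanish (an open condition, because `y₁` is `C¹`), and its derivative is `0`.
-/

noncomputable def wronskian (f g : ℝ → ℝ) (t : ℝ) : ℝ := f t * deriv g t - deriv f t * g t

section Wronskian

variable {f g : ℝ → ℝ} {t : ℝ}

lemma continuous_wronskian (hf : ContDiff ℝ 1 f) (hg : ContDiff ℝ 1 g) :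
    Continuous (wronskian f g) :=
  (hf.continuous.mul (hg.continuous_deriv le_rfl)).sub
    ((hf.continuous_deriv le_rfl).mul hg.continuous)

lemma deriv_div_eq_wronskian_div_sq (hf : DifferentiableAt ℝ f t)
    (hg : DifferentiableAt ℝ g t) (hft : f t ≠ 0) :
    deriv (fun r => g r / f r) t = wronskian f g t / f t ^ 2 := by
  have hq : HasDerivAt (fun r => g r / f r)
      ((deriv g t * f t - g t * deriv f t) / f t ^ 2) t :=
    hg.hasDerivAt.div hf.hasDerivAt hft
  rw [hq.deriv, wronskian]
  ring

lemma wronskian_linear_combination (hf : DifferentiableAt ℝ f t)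
    (hg : DifferentiableAt ℝ g t) (c d : ℝ) :
    wronskian f (fun r => c * f r + d * g r) t = d * wronskian f g t := by
  have hu : HasDerivAt (fun r => c * f r + d * g r) (c * deriv f t + d * deriv g t) t :=
    (hf.hasDerivAt.const_mul c).add (hg.hasDerivAt.const_mul d)
  rw [wronskian, wronskian, hu.deriv]
  ring

lemma deriv_div_div_wronskian_eq (hf : DifferentiableAt ℝ f t)
    (hg : DifferentiableAt ℝ g t) (hft : f t ≠ 0) (hWt : wronskian f g t ≠ 0) (c d : ℝ) :
    deriv (fun r => (c * f r + d * g r) / f r) t / (wronskian f g t / f t ^ 2) = d := by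
  have hu : DifferentiableAt ℝ (fun r => c * f r + d * g r) t :=
    (hf.const_mul c).add (hg.const_mul d)
  rw [deriv_div_eq_wronskian_div_sq hf hu hft, wronskian_linear_combination hf hg,
    mul_div_assoc, mul_div_cancel_right₀ d (div_ne_zero hWt (pow_ne_zero 2 hft))]

theorem deriv_polya_factor_eq_zero (hf : ContDiff ℝ 1 f) (hg : ContDiff ℝ 1 g)
    (hft : f t ≠ 0) (hWt : wronskian f g t ≠ 0) (c d : ℝ) :
    deriv (fun s => deriv (fun r => (c * f r + d * g r) / f r) s /
      (wronskian f g s / f s ^ 2)) t = 0 := by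
  have h_const : (fun s => deriv (fun r => (c * f r + d * g r) / f r) s /
      (wronskian f g s / f s ^ 2)) =ᶠ[𝓝 t] fun _ => d := by
    filter_upwards [hf.continuous.continuousAt.eventually_ne hft,
      (continuous_wronskian hf hg).continuousAt.eventually_ne hWt] with s hfs hWs
    exact deriv_div_div_wronskian_eq (hf.differentiable one_ne_zero s)
      (hg.differentiable one_ne_zero s) hfs hWs c d
  rw [h_const.deriv_eq, deriv_const]

end Wronskian

theorem stmt10_general (a b : ℝ) (y1 y2 : ℝ → ℝ)
    (hy1 : ContDiff ℝ 2 y1) (hy2 : ContDiff ℝ 2 y2)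
    (hy1pos : ∀ t ∈ Icc a b, 0 < y1 t)
    (hW : ∀ t ∈ Icc a b, 0 < y1 t * deriv y2 t - deriv y1 t * y2 t) :
    (∀ t ∈ Icc a b, 0 < y1 t) ∧
    (∀ t ∈ Icc a b, 0 < (y1 t * deriv y2 t - deriv y1 t * y2 t) / (y1 t)^2) ∧
    (∀ c d : ℝ, ∀ t ∈ Icc a b,
      y1 t * ((y1 t * deriv y2 t - deriv y1 t * y2 t) / (y1 t)^2) *
        deriv (fun s => deriv (fun r => (c * y1 r + d * y2 r) / y1 r) s /
          ((y1 s * deriv y2 s - deriv y1 s * y2 s) / (y1 s)^2)) t = 0) := by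
  refine ⟨hy1pos, fun t ht => div_pos (hW t ht) (pow_pos (hy1pos t ht) 2), ?_⟩
  intro c d t ht
  have h_zero := deriv_polya_factor_eq_zero (hy1.of_le one_le_two) (hy2.of_le one_le_two)
    (hy1pos t ht).ne' (hW t ht).ne' c d
  exact mul_eq_zero_of_right _ h_zero

/-- Pólya factorization for second order operators: if `y₁, y₂` form a Markov system on
`[a,b]` (`y₁ > 0` and the Wronskian `W = y₁y₂' - y₁'y₂ > 0`), then `v₁ = y₁` and
`v₂ = W/y₁²` are positive on `[a,b]`, and every `u` in the span of `y₁, y₂` satisfies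
`v₁ v₂ (1/v₂ (u/v₁)')' = 0` on `[a,b]`. -/
theorem stmt10 (a b : ℝ) (hab : a < b) (y1 y2 : ℝ → ℝ)
    (hy1 : ContDiff ℝ 2 y1) (hy2 : ContDiff ℝ 2 y2)
    (hy1pos : ∀ t ∈ Icc a b, 0 < y1 t)
    (hW : ∀ t ∈ Icc a b, 0 < y1 t * deriv y2 t - deriv y1 t * y2 t) :
    (∀ t ∈ Icc a b, 0 < y1 t) ∧
    (∀ t ∈ Icc a b, 0 < (y1 t * deriv y2 t - deriv y1 t * y2 t) / (y1 t)^2) ∧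
    (∀ c d : ℝ, ∀ t ∈ Icc a b,
      y1 t * ((y1 t * deriv y2 t - deriv y1 t * y2 t) / (y1 t)^2) *
        deriv (fun s => deriv (fun r => (c * y1 r + d * y2 r) / y1 r) s /
          ((y1 s * deriv y2 s - deriv y1 s * y2 s) / (y1 s)^2)) t = 0) :=
  stmt10_general a b y1 y2 hy1 hy2 hy1pos hW
end

section
/- Let u be a cubic polynomial (i.e., u⁗ ≡ 0) on [a,b] with u'(a) = u(b) = u''(b) = 0 and u not identically zero. Then u has no zero in [a,b); in particular u is of constant sign on [a,b). -/
/-!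
Since `u''` is affine and vanishes at `b`, and `u'(a) = u(b) = 0`, integrating twice gives
`u t = c₃ (b - t) (3 (b - a)² - (b - t)²)`. For `a ≤ t < b` both factors after `c₃` are
positive, and `c₃ ≠ 0` because otherwise `u ≡ 0`.
-/

open Set

theorem hasDerivAt_quadratic (c0 c1 c2 t : ℝ) :
    HasDerivAt (fun t : ℝ => c0 + c1 * t + c2 * t ^ 2) (c1 + 2 * c2 * t) t :=
  ((((hasDerivAt_id t).const_mul c1).const_add c0).add
    ((hasDerivAt_pow 2 t).const_mul c2)).congr_deriv (by push_cast; ring)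

theorem hasDerivAt_cubic (c0 c1 c2 c3 t : ℝ) :
    HasDerivAt (fun t : ℝ => c0 + c1 * t + c2 * t ^ 2 + c3 * t ^ 3)
      (c1 + 2 * c2 * t + 3 * c3 * t ^ 2) t :=
  ((hasDerivAt_quadratic c0 c1 c2 t).add ((hasDerivAt_pow 3 t).const_mul c3)).congr_deriv
    (by push_cast; ring)

theorem cubic_eq_factored_of_boundary_conditions {a b c0 c1 c2 c3 : ℝ}
    (h1a : c1 + 2 * c2 * a + 3 * c3 * a ^ 2 = 0)
    (hb : c0 + c1 * b + c2 * b ^ 2 + c3 * b ^ 3 = 0)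
    (h2b : 2 * c2 + 2 * (3 * c3) * b = 0) (t : ℝ) :
    c0 + c1 * t + c2 * t ^ 2 + c3 * t ^ 3 = c3 * ((b - t) * (3 * (b - a) ^ 2 - (b - t) ^ 2)) := by
  linear_combination hb + (t - b) * h1a + ((t - b) * (t + b - 2 * a) / 2) * h2b

theorem mul_three_sq_sub_sq_pos {a b t : ℝ} (ht : t ∈ Ico a b) :
    0 < (b - t) * (3 * (b - a) ^ 2 - (b - t) ^ 2) := by
  obtain ⟨hat, htb⟩ := ht
  have hbt : 0 < b - t := sub_pos.2 htb
  have hle : (b - t) ^ 2 ≤ (b - a) ^ 2 := pow_le_pow_left₀ hbt.le (by linarith) 2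
  exact mul_pos hbt (by nlinarith [pow_pos hbt 2])

theorem stmt15_general (a b : ℝ) (c0 c1 c2 c3 : ℝ) (u : ℝ → ℝ)
    (hu : ∀ t, u t = c0 + c1 * t + c2 * t^2 + c3 * t^3)
    (h1a : deriv u a = 0) (hb : u b = 0) (h2b : deriv (deriv u) b = 0)
    (hne : ¬∀ t, u t = 0) :
    (∀ t ∈ Ico a b, u t ≠ 0) ∧
    ((∀ t ∈ Ico a b, 0 < u t) ∨ (∀ t ∈ Ico a b, u t < 0)) := by
  have hu' : deriv u = fun t => c1 + 2 * c2 * t + 3 * c3 * t ^ 2 := by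
    rw [funext hu]
    exact funext fun t => (hasDerivAt_cubic c0 c1 c2 c3 t).deriv
  rw [hu', (hasDerivAt_quadratic c1 (2 * c2) (3 * c3) b).deriv] at h2b
  rw [hu'] at h1a
  rw [hu] at hb
  have hfactor : ∀ t, u t = c3 * ((b - t) * (3 * (b - a) ^ 2 - (b - t) ^ 2)) := fun t =>
    (hu t).trans (cubic_eq_factored_of_boundary_conditions h1a hb h2b t)
  have hc3 : c3 ≠ 0 := fun h => hne fun t => by simp [hfactor t, h]
  have hsign : (∀ t ∈ Ico a b, 0 < u t) ∨ (∀ t ∈ Ico a b, u t < 0) := by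
    rcases hc3.lt_or_gt with hneg | hpos
    · exact .inr fun t ht => hfactor t ▸ mul_neg_of_neg_of_pos hneg (mul_three_sq_sub_sq_pos ht)
    · exact .inl fun t ht => hfactor t ▸ mul_pos hpos (mul_three_sq_sub_sq_pos ht)
  exact ⟨fun t ht => hsign.elim (fun h => (h t ht).ne') (fun h => (h t ht).ne), hsign⟩

/-- A nontrivial cubic polynomial `u` with `u'(a) = u(b) = u''(b) = 0` has no zero in
`[a,b)`; in particular it is of constant sign on `[a,b)`. -/
theorem stmt15 (a b : ℝ) (hab : a < b) (c0 c1 c2 c3 : ℝ) (u : ℝ → ℝ)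
    (hu : ∀ t, u t = c0 + c1 * t + c2 * t^2 + c3 * t^3)
    (h1a : deriv u a = 0) (hb : u b = 0) (h2b : deriv (deriv u) b = 0)
    (hne : ¬∀ t, u t = 0) :
    (∀ t ∈ Ico a b, u t ≠ 0) ∧
    ((∀ t ∈ Ico a b, 0 < u t) ∨ (∀ t ∈ Ico a b, u t < 0)) :=
  stmt15_general a b c0 c1 c2 c3 u hu h1a hb h2b hne
end
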